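/- Let n ≥ 1 and d ≥ 1 be integers, fix an index j ∈ {1, …, n}, and let d₁, …, dₙ be real numbers with dᵢ = 1 for every i ≠ j, with d_j > 1, and with (d−1)·d_j < d. Then the cardinality of {(m₁, …, mₙ) ∈ ℕⁿ : m₁d₁ + ⋯ + mₙdₙ ≤ d} equals exactly C(n+d, n) − C(n+d−2, d−1), where C(·,·) denotes the binomial coefficient. -/

import Mathlib

/-!
With `Dᵢ = 1` for `i ≠ j`, the weighted sum is `|m| + m_j (D_j - 1)`, where `|m| = ∑ mᵢ`.
Since `m_j ≤ |m|` and `(d - 1) D_j < d`, every `m` with `|m| ≤ d - 1` satisfies the bound,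
while among those with `|m| = d` exactly the ones with `m_j = 0` do. By stars and bars there
are `C(n + d, n)` tuples with `|m| ≤ d`, and `m ↦ m + e_j` identifies tuples with `|m| = d - 1`
with those having `|m| = d` and `m_j ≥ 1`, which are therefore `C(n + d - 2, d - 1)` many.
-/

section

variable {ι : Type*} [Fintype ι]

theorem ncard_setOf_sum_eq (k : ℕ) :
    {m : ι → ℕ | ∑ i, m i = k}.ncard = (Fintype.card ι + k - 1).choose k := by
  classical
  rw [← Nat.card_coe_set_eq]
  exact (Nat.card_congr (Sym.equivNatSumOfFintype ι k).symm).trans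
    (by rw [Nat.card_eq_fintype_card, Sym.card_sym_eq_choose])

def sumEqOptionEquivSumLe (d : ℕ) :
    {m : Option ι → ℕ | ∑ i, m i = d} ≃ {m : ι → ℕ | ∑ i, m i ≤ d} where
  toFun m := ⟨fun i => m.1 (some i), le_add_self.trans_eq ((Fintype.sum_option _).symm.trans m.2)⟩
  invFun m := ⟨fun o => o.elim (d - ∑ i, m.1 i) m.1, by
    rw [Set.mem_ofPred_eq, Fintype.sum_option]; exact Nat.sub_add_cancel m.2⟩
  left_inv m := by
    have := m.2
    rw [Set.mem_ofPred_eq, Fintype.sum_option] at this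
    ext (_ | i)
    · simp only [Option.elim]; omega
    · rfl
  right_inv m := rfl

theorem finite_setOf_sum_le (d : ℕ) : {m : ι → ℕ | ∑ i, m i ≤ d}.Finite := by
  classical
  exact Set.finite_coe_iff.mp <|
    Finite.of_equiv _ ((Sym.equivNatSumOfFintype (Option ι) d).trans (sumEqOptionEquivSumLe d))

theorem ncard_setOf_sum_le (d : ℕ) :
    {m : ι → ℕ | ∑ i, m i ≤ d}.ncard = (Fintype.card ι + d).choose (Fintype.card ι) := by
  rw [← Nat.card_coe_set_eq, ← Nat.card_congr (sumEqOptionEquivSumLe d), Nat.card_coe_set_eq,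
    ncard_setOf_sum_eq, Fintype.card_option, Nat.add_right_comm, Nat.add_sub_cancel,
    Nat.choose_symm_add]

theorem image_add_single_setOf_sum_eq [DecidableEq ι] (j : ι) (k : ℕ) :
    (fun m : ι → ℕ => m + Pi.single j 1) '' {m | ∑ i, m i = k} =
      {m | ∑ i, m i = k + 1 ∧ 1 ≤ m j} := by
  have sum_add_single (m : ι → ℕ) : ∑ i, (m + Pi.single j 1 : ι → ℕ) i = ∑ i, m i + 1 := by
    simp [Finset.sum_add_distrib]
  ext m
  constructor
  · rintro ⟨m, hm, rfl⟩
    exact ⟨by rw [sum_add_single, hm], by simp⟩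
  · rintro ⟨hm, hmj⟩
    have hle : Pi.single j 1 ≤ m := by
      intro i; rcases eq_or_ne i j with rfl | h <;> simp [*]
    refine ⟨m - Pi.single j 1, ?_, tsub_add_cancel_of_le hle⟩
    have := sum_add_single (m - Pi.single j 1)
    rw [tsub_add_cancel_of_le hle] at this
    simp only [Set.mem_ofPred_eq]; omega

theorem ncard_setOf_sum_eq_succ_and_one_le [DecidableEq ι] (j : ι) (k : ℕ) :
    {m : ι → ℕ | ∑ i, m i = k + 1 ∧ 1 ≤ m j}.ncard = (Fintype.card ι + k - 1).choose k := by
  rw [← image_add_single_setOf_sum_eq, Set.ncard_image_of_injective _ (add_left_injective _),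
    ncard_setOf_sum_eq]

variable {j : ι} {D : ι → ℝ}

theorem sum_mul_weight_eq_sum_add (hD : ∀ i, i ≠ j → D i = 1) (m : ι → ℕ) :
    ∑ i, (m i : ℝ) * D i = ((∑ i, m i : ℕ) : ℝ) + m j * (D j - 1) := by
  have h : ∑ i, ((m i : ℝ) * D i - m i) = m j * D j - m j :=
    Finset.sum_eq_single_of_mem j (Finset.mem_univ j) fun i _ hi => by rw [hD i hi]; ring
  rw [Finset.sum_sub_distrib] at h
  push_cast
  linarith

theorem add_mul_sub_one_le_iff {s t d : ℕ} {a : ℝ} (hts : t ≤ s) (ha : 1 < a)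
    (hda : ((d : ℝ) - 1) * a < d) :
    (s : ℝ) + t * (a - 1) ≤ d ↔ s ≤ d ∧ ¬(s = d ∧ 1 ≤ t) := by
  have hts' : (t : ℝ) ≤ s := by exact_mod_cast hts
  constructor
  · intro h
    have hsd : s ≤ d := by
      have : (0 : ℝ) ≤ t * (a - 1) := by positivity
      exact_mod_cast (by linarith : (s : ℝ) ≤ d)
    refine ⟨hsd, fun ⟨hs, ht⟩ => ?_⟩
    have : (1 : ℝ) ≤ t := by exact_mod_cast ht
    subst hs
    nlinarith
  · rintro ⟨hsd, hne⟩
    rcases Nat.eq_zero_or_pos t with rfl | ht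
    · simpa using hsd
    · have hs : (s : ℝ) ≤ d - 1 := by
        have : s + 1 ≤ d := by omega
        have : ((s + 1 : ℕ) : ℝ) ≤ d := by exact_mod_cast this
        push_cast at this
        linarith
      nlinarith

theorem setOf_sum_mul_weight_le_eq_diff {d : ℕ} (hD : ∀ i, i ≠ j → D i = 1) (hj : 1 < D j)
    (hdj : ((d : ℝ) - 1) * D j < d) :
    {m : ι → ℕ | ∑ i, (m i : ℝ) * D i ≤ d} =
      {m | ∑ i, m i ≤ d} \ {m | ∑ i, m i = d ∧ 1 ≤ m j} := by
  ext m
  rw [Set.mem_ofPred_eq, sum_mul_weight_eq_sum_add hD m]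
  exact add_mul_sub_one_le_iff
    (Finset.single_le_sum (fun i _ => Nat.zero_le (m i)) (Finset.mem_univ j)) hj hdj

end

theorem stmt_1_general (n d : ℕ) (hd : 1 ≤ d) (j : Fin n) (D : Fin n → ℝ)
    (hD : ∀ i, i ≠ j → D i = 1) (hj : 1 < D j) (hdj : ((d : ℝ) - 1) * D j < (d : ℝ)) :
    {m : Fin n → ℕ | ∑ i, (m i : ℝ) * D i ≤ (d : ℝ)}.Finite ∧
    {m : Fin n → ℕ | ∑ i, (m i : ℝ) * D i ≤ (d : ℝ)}.ncard =
      (n + d).choose n - (n + d - 2).choose (d - 1) := by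
  rw [setOf_sum_mul_weight_le_eq_diff hD hj hdj]
  have hsub : {m : Fin n → ℕ | ∑ i, m i = d ∧ 1 ≤ m j} ⊆ {m | ∑ i, m i ≤ d} :=
    fun m hm => hm.1.le
  have hfin := finite_setOf_sum_le (ι := Fin n) d
  refine ⟨hfin.sdiff, ?_⟩
  obtain ⟨k, rfl⟩ : ∃ k, d = k + 1 := ⟨d - 1, by omega⟩
  rw [Set.ncard_sdiff hsub (hfin.subset hsub), ncard_setOf_sum_le,
    ncard_setOf_sum_eq_succ_and_one_le, Fintype.card_fin, Nat.add_sub_cancel,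
    show n + (k + 1) - 2 = n + k - 1 by omega]

/-- For integers `n ≥ 1`, `d ≥ 1`, an index `j`, and real numbers with
`D i = 1` for `i ≠ j`, `D j > 1` and `(d−1)·D j < d`, the set `{m ∈ ℕⁿ : ∑ mᵢ Dᵢ ≤ d}`
is finite and its cardinality equals exactly `C(n+d, n) − C(n+d−2, d−1)`. -/
theorem stmt_1 (n d : ℕ) (hn : 1 ≤ n) (hd : 1 ≤ d) (j : Fin n) (D : Fin n → ℝ)
    (hD : ∀ i, i ≠ j → D i = 1) (hj : 1 < D j) (hdj : ((d : ℝ) - 1) * D j < (d : ℝ)) :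
    {m : Fin n → ℕ | ∑ i, (m i : ℝ) * D i ≤ (d : ℝ)}.Finite ∧
    {m : Fin n → ℕ | ∑ i, (m i : ℝ) * D i ≤ (d : ℝ)}.ncard =
      (n + d).choose n - (n + d - 2).choose (d - 1) :=
  stmt_1_general n d hd j D hD hj hdj
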